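/- Let f : X → ℝ be a filter on a Lefschetz complex and let Φ, Ψ be two shallow orders of f. Then there is a sequence of shallow orders Φ = Φ_0, Φ_1, …, Φ_m = Ψ such that for each 1 ≤ k ≤ m the orders Φ_{k−1} and Φ_k differ by a single transposition of two adjacent positions. -/
import Mathlib


attribute [local instance] Classical.propDecidable

/-- A Lefschetz complex over an ambient finite type `C` of potential cells:
a finite set `cells` of cells, a dimension function, and a mod-2 incidence
function `bd` supported on `cells`, with `bd x y ≠ 0` only if
`dim y = dim x + 1`, and `∂∘∂ = 0` mod 2. -/
structure LC (C : Type) [Fintype C] [DecidableEq C] : Type where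
  cells : Finset C
  dim : C → ℤ
  bd : C → C → ZMod 2
  bd_mem : ∀ x y, bd x y ≠ 0 → x ∈ cells ∧ y ∈ cells
  bd_dim : ∀ x y, bd x y ≠ 0 → dim y = dim x + 1
  bd_sq : ∀ x z, ∑ y, bd x y * bd y z = 0

variable {C : Type} [Fintype C] [DecidableEq C]

/-- A filter on a Lefschetz complex: injective on the cells, and increasing
along the facet relation. -/
def IsFilter (L : LC C) (f : C → ℝ) : Prop :=
  (∀ x ∈ L.cells, ∀ y ∈ L.cells, f x = f y → x = y) ∧
  ∀ x y, L.bd x y ≠ 0 → f x < f y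

lemma LC.bd_self (L : LC C) (a : C) : L.bd a a = 0 := by
  by_contra h
  have := L.bd_dim a a h
  omega

/-- The boundary map of the quotient after canceling `(s,t)`:
`∂'(x,y) = ∂(x,y) + ∂(s,y)·∂(x,t)` on the remaining cells, `0` elsewhere. -/
def cancelBd (L : LC C) (s t : C) : C → C → ZMod 2 := fun x y =>
  if x ∈ L.cells \ {s, t} ∧ y ∈ L.cells \ {s, t} then
    L.bd x y + L.bd s y * L.bd x t
  else 0

private lemma zmod2_add_self : ∀ a : ZMod 2, a + a = 0 := by decide

/-- The quotient Lefschetz complex after canceling the facet-cofacet pair `(s,t)`. -/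
noncomputable def cancel (L : LC C) (s t : C) : LC C :=
  if hst : L.bd s t = 1 then
    { cells := L.cells \ {s, t}
      dim := L.dim
      bd := cancelBd L s t
      bd_mem := by
        intro x y h
        unfold cancelBd at h
        split_ifs at h with hc
        · exact hc
        · exact absurd rfl h
      bd_dim := by
        intro x y h
        unfold cancelBd at h
        split_ifs at h with hc
        · by_cases hxy : L.bd x y = 0
          · rw [hxy, zero_add] at h
            have h1 : L.bd s y ≠ 0 := fun hz => by simp [hz] at h
            have h2 : L.bd x t ≠ 0 := fun hz => by simp [hz] at h
            have d1 := L.bd_dim s y h1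
            have d2 := L.bd_dim x t h2
            have d3 := L.bd_dim s t (by simp [hst])
            omega
          · exact L.bd_dim x y hxy
        · exact absurd rfl h
      bd_sq := by
        intro x z
        by_cases hx : x ∈ L.cells \ {s, t}
        swap
        · refine Finset.sum_eq_zero fun y _ => ?_
          unfold cancelBd
          rw [if_neg (fun hc => hx hc.1), zero_mul]
        by_cases hz : z ∈ L.cells \ {s, t}
        swap
        · refine Finset.sum_eq_zero fun y _ => ?_
          have h0 : cancelBd L s t y z = 0 := by
            unfold cancelBd; rw [if_neg (fun hc => hz hc.2)]
          rw [h0, mul_zero]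
        have key : ∀ y, cancelBd L s t x y * cancelBd L s t y z =
            (L.bd x y + L.bd s y * L.bd x t) * (L.bd y z + L.bd s z * L.bd y t) := by
          intro y
          by_cases hy : y ∈ L.cells \ {s, t}
          · unfold cancelBd
            rw [if_pos ⟨hx, hy⟩, if_pos ⟨hy, hz⟩]
          · have lhs0 : cancelBd L s t x y = 0 := by
              unfold cancelBd; rw [if_neg (fun hc => hy hc.2)]
            rw [lhs0, zero_mul]
            by_cases hyc : y ∈ L.cells
            · have hyst : y = s ∨ y = t := by
                simp only [Finset.mem_sdiff, Finset.mem_insert, Finset.mem_singleton] at hy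
                tauto
              rcases hyst with rfl | rfl
              · simp [L.bd_self, hst, zmod2_add_self]
              · simp [L.bd_self, hst, zmod2_add_self]
            · have b1 : L.bd x y = 0 := by
                by_contra hb; exact hyc (L.bd_mem x y hb).2
              have b2 : L.bd s y = 0 := by
                by_contra hb; exact hyc (L.bd_mem s y hb).2
              have b3 : L.bd y z = 0 := by
                by_contra hb; exact hyc (L.bd_mem y z hb).1
              have b4 : L.bd y t = 0 := by
                by_contra hb; exact hyc (L.bd_mem y t hb).1
              rw [b1, b2, b3, b4]
              ring
        rw [Finset.sum_congr rfl fun y _ => key y]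
        have expand : ∀ y : C,
            (L.bd x y + L.bd s y * L.bd x t) * (L.bd y z + L.bd s z * L.bd y t) =
            L.bd x y * L.bd y z + L.bd s z * (L.bd x y * L.bd y t)
              + L.bd x t * (L.bd s y * L.bd y z)
              + L.bd x t * L.bd s z * (L.bd s y * L.bd y t) := by
          intro y; ring
        rw [Finset.sum_congr rfl fun y _ => expand y]
        simp only [Finset.sum_add_distrib, ← Finset.mul_sum, L.bd_sq, mul_zero,
          add_zero, zero_add] }
  else L

/-- The boundary operator on mod-2 chains. -/
noncomputable def bdOp (L : LC C) : (C → ZMod 2) →ₗ[ZMod 2] (C → ZMod 2) where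
  toFun c := fun x => ∑ y, L.bd x y * c y
  map_add' a b := by
    funext x
    simp [mul_add, Finset.sum_add_distrib]
  map_smul' m a := by
    funext x
    simp only [Pi.smul_apply, smul_eq_mul, RingHom.id_apply]
    rw [Finset.mul_sum]
    exact Finset.sum_congr rfl fun y _ => by ring

/-- The `p`-chains of a Lefschetz complex: mod-2 chains supported on cells of
dimension `p`. -/
def chains (L : LC C) (p : ℤ) : Submodule (ZMod 2) (C → ZMod 2) where
  carrier := {c | ∀ x, c x ≠ 0 → x ∈ L.cells ∧ L.dim x = p}
  zero_mem' := by intro x hx; simp at hx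
  add_mem' := by
    intro a b ha hb x hx
    by_cases h1 : a x = 0
    · refine hb x fun h2 => hx ?_
      show a x + b x = 0
      rw [h1, h2, add_zero]
    · exact ha x h1
  smul_mem' := by
    intro m c hc x hx
    refine hc x fun h0 => hx ?_
    show m * c x = 0
    rw [h0, mul_zero]

/-- The `p`-cycles. -/
noncomputable def cycles (L : LC C) (p : ℤ) : Submodule (ZMod 2) (C → ZMod 2) :=
  chains L p ⊓ LinearMap.ker (bdOp L)

/-- The `p`-boundaries. -/
noncomputable def boundaries (L : LC C) (p : ℤ) : Submodule (ZMod 2) (C → ZMod 2) :=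
  Submodule.map (bdOp L) (chains L (p + 1))

/-- The mod-2 homology of a Lefschetz complex in dimension `p`. -/
noncomputable def homology (L : LC C) (p : ℤ) : Type :=
  cycles L p ⧸ (Submodule.comap (cycles L p).subtype (boundaries L p))

noncomputable instance (L : LC C) (p : ℤ) : AddCommGroup (homology L p) :=
  inferInstanceAs (AddCommGroup (cycles L p ⧸
    Submodule.comap (cycles L p).subtype (boundaries L p)))

noncomputable instance (L : LC C) (p : ℤ) : Module (ZMod 2) (homology L p) :=
  inferInstanceAs (Module (ZMod 2) (cycles L p ⧸
    Submodule.comap (cycles L p).subtype (boundaries L p)))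

/-- The boundary of the cell `y`, as a chain. -/
def col (L : LC C) (y : C) : C → ZMod 2 := fun x => L.bd x y

/-- The chain `v` is the boundary of a chain supported on cells with filter
value `< b`. -/
def IsBdryBelow (L : LC C) (f : C → ℝ) (b : ℝ) (v : C → ZMod 2) : Prop :=
  ∃ c : C → ZMod 2, (∀ z, c z ≠ 0 → z ∈ L.cells ∧ f z < b) ∧ bdOp L c = v

/-- The cell `y` gives death: `[∂y] ≠ 0` in the homology of the sublevel set
strictly below `f y`. -/
def givesDeath (L : LC C) (f : C → ℝ) (y : C) : Prop :=
  y ∈ L.cells ∧ ¬ IsBdryBelow L f (f y) (col L y)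

/-- The cell `y` gives birth: `[∂y] = 0` in the homology of the sublevel set
strictly below `f y`. -/
def givesBirth (L : LC C) (f : C → ℝ) (y : C) : Prop :=
  y ∈ L.cells ∧ IsBdryBelow L f (f y) (col L y)

/-- The unique chain supported on death-giving cells below `y` whose boundary
is `∂y` (for birth-giving `y`); junk value otherwise. -/
noncomputable def canChain (L : LC C) (f : C → ℝ) (y : C) : C → ZMod 2 :=
  if h : ∃ c : C → ZMod 2,
      (∀ z, c z ≠ 0 → f z < f y ∧ givesDeath L f z) ∧ bdOp L c = col L y
  then h.choose else 0

/-- The canonical cycle `d_y = y + c_y` of a birth-giving cell `y`. -/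
noncomputable def canCycle (L : LC C) (f : C → ℝ) (y : C) : C → ZMod 2 :=
  Pi.single y 1 + canChain L f y

/-- `v` and `w` are homologous in the sublevel complex strictly below `b`. -/
def HomBelow (L : LC C) (f : C → ℝ) (b : ℝ) (v w : C → ZMod 2) : Prop :=
  ∃ c : C → ZMod 2, (∀ z, c z ≠ 0 → z ∈ L.cells ∧ f z < b) ∧ bdOp L c = v + w

/-- Sorting a finset of cells by increasing filter value (fueled recursion). -/
noncomputable def sortAux (f : C → ℝ) : ℕ → Finset C → List C
  | 0, _ => []
  | n + 1, S =>
    if h : S.Nonempty then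
      let m := (Finset.exists_min_image S f h).choose
      m :: sortAux f n (S.erase m)
    else []

/-- The cells of `L` listed in increasing order of filter value. -/
noncomputable def sortedCells (L : LC C) (f : C → ℝ) : List C :=
  sortAux f L.cells.card L.cells

/-- An element of `S` maximizing `f`, with default value. -/
noncomputable def maxCellD (f : C → ℝ) (S : Finset C) (dflt : C) : C :=
  if h : S.Nonempty then (Finset.exists_max_image S f h).choose else dflt

/-- One step of the persistence pairing algorithm: the state is the pair
(unpaired birth-giving cells, birth-death pairs found so far), and `y` is the
next cell in the filter order.  If `y` gives birth it is added to the unpaired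
set; if `y` gives death, the unique subset `A` of the unpaired cells whose
canonical cycles sum to a cycle homologous to `∂y` below `y` is found, and `y`
is paired with the cell of `A` of maximal filter value. -/
noncomputable def pairStep (L : LC C) (f : C → ℝ) (st : Finset C × Finset (C × C))
    (y : C) : Finset C × Finset (C × C) :=
  if givesBirth L f y then (insert y st.1, st.2)
  else
    let A : Finset C :=
      if h : ∃! A : Finset C, A ⊆ st.1 ∧
          HomBelow L f (f y) (∑ x ∈ A, canCycle L f x) (col L y)
      then h.exists.choose else ∅
    let s := maxCellD f A y
    (st.1.erase s, insert (s, y) st.2)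

/-- The state of the persistence pairing after processing all cells. -/
noncomputable def pairState (L : LC C) (f : C → ℝ) : Finset C × Finset (C × C) :=
  (sortedCells L f).foldl (pairStep L f) (∅, ∅)

/-- The birth-death pairs `BD(f)` of the filter `f`. -/
noncomputable def BD (L : LC C) (f : C → ℝ) : Finset (C × C) :=
  (pairState L f).2

/-- The state of the persistence pairing after processing the cells with
filter value `< b`. -/
noncomputable def stateBelow (L : LC C) (f : C → ℝ) (b : ℝ) :
    Finset C × Finset (C × C) :=
  ((sortedCells L f).filter (fun x => decide (f x < b))).foldl (pairStep L f) (∅, ∅)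

/-- The birth-giving cells with value `< b` that are unpaired by the
persistence pairing restricted to the sublevel set below `b`. -/
noncomputable def unpairedBelow (L : LC C) (f : C → ℝ) (b : ℝ) : Finset C :=
  (stateBelow L f b).1

/-- `(s,t)` is a shallow pair: `s` is the facet of `t` with maximal filter
value and `t` is the cofacet of `s` with minimal filter value. -/
def IsShallow (L : LC C) (f : C → ℝ) (s t : C) : Prop :=
  L.bd s t = 1 ∧ (∀ x, L.bd x t ≠ 0 → f x ≤ f s) ∧ (∀ y, L.bd s y ≠ 0 → f t ≤ f y)

/-- Cancel a list of pairs in sequence. -/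
noncomputable def cancelList : LC C → List (C × C) → LC C
  | L, [] => L
  | L, p :: ps => cancelList (cancel L p.1 p.2) ps

/-- The quotient after canceling the first `k` pairs of the sequence `Φ`. -/
noncomputable def quotAt (L : LC C) {n : ℕ} (Φ : Fin n → C × C) (k : ℕ) : LC C :=
  cancelList L ((List.ofFn Φ).take k)

/-- `Φ` is a shallow order: an enumeration of the birth-death pairs of `f`
such that each pair is shallow for the quotient obtained by canceling all
preceding pairs. -/
def IsShallowOrder (L : LC C) (f : C → ℝ) {n : ℕ} (Φ : Fin n → C × C) : Prop :=
  Function.Injective Φ ∧ (∀ i, Φ i ∈ BD L f) ∧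
  ∀ i : Fin n, IsShallow (quotAt L Φ i) f (Φ i).1 (Φ i).2

/-- The depth poset: the intersection of the strict total orders induced on
`BD(f)` by all shallow orders. -/
def DepthRel (L : LC C) (f : C → ℝ) (φ ψ : C × C) : Prop :=
  φ ∈ BD L f ∧ ψ ∈ BD L f ∧
  ∀ Φ : Fin (BD L f).card → C × C, IsShallowOrder L f Φ →
    ∀ i j : Fin (BD L f).card, Φ i = φ → Φ j = ψ → i < j

/-- The rank of the lower-left minor of the ordered boundary matrix with rows
the cells of filter value `≥ a` and columns the cells of filter value `≤ b`. -/
noncomputable def llRank (L : LC C) (f : C → ℝ) (a b : ℝ) : ℕ :=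
  Matrix.rank (Matrix.of fun (x : {x : C // x ∈ L.cells ∧ a ≤ f x})
    (y : {y : C // y ∈ L.cells ∧ f y ≤ b}) => L.bd x.1 y.1)

/-- `Φ` and `Ψ` differ by transposing two adjacent positions. -/
def AdjSwap {n : ℕ} (Φ Ψ : Fin n → C × C) : Prop :=
  ∃ (k : Fin n) (hk : (k : ℕ) + 1 < n),
    Ψ k = Φ ⟨k + 1, hk⟩ ∧ Ψ ⟨k + 1, hk⟩ = Φ k ∧
    ∀ i : Fin n, i ≠ k → i ≠ ⟨k + 1, hk⟩ → Ψ i = Φ i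
section ConnectedAux

private lemma zmod2_factor {a b : ZMod 2} (h : a * b ≠ 0) : a ≠ 0 ∧ b ≠ 0 := by
  constructor <;> rintro rfl <;> simp at h

private lemma LC.ext' {L₁ L₂ : LC C} (hc : L₁.cells = L₂.cells)
    (hd : L₁.dim = L₂.dim) (hb : L₁.bd = L₂.bd) : L₁ = L₂ := by
  cases L₁; cases L₂
  simp only [LC.mk.injEq]
  exact ⟨hc, hd, hb⟩

private lemma cancel_cells {L : LC C} {s t : C} (h : L.bd s t = 1) :
    (cancel L s t).cells = L.cells \ {s, t} := by
  unfold cancel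
  rw [dif_pos h]

private lemma cancel_bd {L : LC C} {s t : C} (h : L.bd s t = 1) :
    (cancel L s t).bd = cancelBd L s t := by
  unfold cancel
  rw [dif_pos h]

private lemma cancel_dim {L : LC C} {s t : C} (h : L.bd s t = 1) :
    (cancel L s t).dim = L.dim := by
  unfold cancel
  rw [dif_pos h]

private lemma cancel_cells_subset (L : LC C) (s t : C) : (cancel L s t).cells ⊆ L.cells := by
  unfold cancel
  split_ifs
  · exact Finset.sdiff_subset
  · exact Finset.Subset.refl _

private lemma isFilter_cancel {Q : LC C} {f : C → ℝ} {s t : C}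
    (hf : IsFilter Q f) (h : IsShallow Q f s t) : IsFilter (cancel Q s t) f := by
  have h1 : Q.bd s t = 1 := h.1
  constructor
  · intro x hx y hy
    exact hf.1 x (cancel_cells_subset Q s t hx) y (cancel_cells_subset Q s t hy)
  · intro x y hxy
    rw [cancel_bd h1] at hxy
    unfold cancelBd at hxy
    split_ifs at hxy with hc
    · by_cases hb : Q.bd x y = 0
      · rw [hb, zero_add] at hxy
        obtain ⟨h2, h3⟩ := zmod2_factor hxy
        have hxs : f x ≤ f s := h.2.1 x h3
        have hsy : f s < f y := hf.2 s y h2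
        linarith
      · exact hf.2 x y hb
    · exact absurd rfl hxy

private lemma shallow_cross {Q : LC C} {f : C → ℝ} {s t s' t' : C} (hf : IsFilter Q f)
    (hα : IsShallow Q f s t) (hβ : IsShallow Q f s' t') (hss : s ≠ s') :
    Q.bd s t' * Q.bd s' t = 0 := by
  by_contra h
  obtain ⟨h1, h2⟩ := zmod2_factor h
  have hs : s ∈ Q.cells := (Q.bd_mem s t (by rw [hα.1]; exact one_ne_zero)).1
  have hs' : s' ∈ Q.cells := (Q.bd_mem s' t' (by rw [hβ.1]; exact one_ne_zero)).1
  have e1 : f s ≤ f s' := hβ.2.1 s h1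
  have e2 : f s' ≤ f s := hα.2.1 s' h2
  exact hss (hf.1 s hs s' hs' (le_antisymm e1 e2))

private lemma isShallow_cancel {Q : LC C} {f : C → ℝ} {s t s' t' : C} (hf : IsFilter Q f)
    (hα : IsShallow Q f s t) (hβ : IsShallow Q f s' t')
    (h1 : s' ≠ s) (h2 : s' ≠ t) (h3 : t' ≠ s) (h4 : t' ≠ t) :
    IsShallow (cancel Q s t) f s' t' := by
  have hst : Q.bd s t = 1 := hα.1
  have hs' : s' ∈ Q.cells := (Q.bd_mem s' t' (by rw [hβ.1]; exact one_ne_zero)).1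
  have ht' : t' ∈ Q.cells := (Q.bd_mem s' t' (by rw [hβ.1]; exact one_ne_zero)).2
  have hcross : Q.bd s t' * Q.bd s' t = 0 := shallow_cross hf hα hβ (Ne.symm h1)
  have hms' : s' ∈ Q.cells \ {s, t} := by
    simp only [Finset.mem_sdiff, Finset.mem_insert, Finset.mem_singleton]
    exact ⟨hs', by tauto⟩
  have hmt' : t' ∈ Q.cells \ {s, t} := by
    simp only [Finset.mem_sdiff, Finset.mem_insert, Finset.mem_singleton]
    exact ⟨ht', by tauto⟩
  refine ⟨?_, ?_, ?_⟩
  · rw [cancel_bd hst]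
    unfold cancelBd
    rw [if_pos ⟨hms', hmt'⟩, hβ.1, hcross, add_zero]
  · intro x hx
    rw [cancel_bd hst] at hx
    unfold cancelBd at hx
    split_ifs at hx with hc
    · by_cases hb : Q.bd x t' = 0
      · rw [hb, zero_add] at hx
        obtain ⟨hb1, hb2⟩ := zmod2_factor hx
        calc f x ≤ f s := hα.2.1 x hb2
          _ ≤ f s' := hβ.2.1 s hb1
      · exact hβ.2.1 x hb
    · exact absurd rfl hx
  · intro y hy
    rw [cancel_bd hst] at hy
    unfold cancelBd at hy
    split_ifs at hy with hc
    · by_cases hb : Q.bd s' y = 0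
      · rw [hb, zero_add] at hy
        obtain ⟨hb1, hb2⟩ := zmod2_factor hy
        calc f t' ≤ f t := hβ.2.2 t hb2
          _ ≤ f y := hα.2.2 y hb1
      · exact hβ.2.2 y hb
    · exact absurd rfl hy

end ConnectedAux

section ConnectedAux2

private lemma cancel_comm {Q : LC C} {f : C → ℝ} {s t s' t' : C} (hf : IsFilter Q f)
    (hα : IsShallow Q f s t) (hβ : IsShallow Q f s' t')
    (h1 : s' ≠ s) (h2 : s' ≠ t) (h3 : t' ≠ s) (h4 : t' ≠ t) :
    cancel (cancel Q s t) s' t' = cancel (cancel Q s' t') s t := by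
  have hβ' : IsShallow (cancel Q s t) f s' t' := isShallow_cancel hf hα hβ h1 h2 h3 h4
  have hα' : IsShallow (cancel Q s' t') f s t :=
    isShallow_cancel hf hβ hα (Ne.symm h1) (Ne.symm h3) (Ne.symm h2) (Ne.symm h4)
  have hs' : s' ∈ Q.cells := (Q.bd_mem s' t' (by rw [hβ.1]; exact one_ne_zero)).1
  have ht' : t' ∈ Q.cells := (Q.bd_mem s' t' (by rw [hβ.1]; exact one_ne_zero)).2
  have hs : s ∈ Q.cells := (Q.bd_mem s t (by rw [hα.1]; exact one_ne_zero)).1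
  have ht : t ∈ Q.cells := (Q.bd_mem s t (by rw [hα.1]; exact one_ne_zero)).2
  have hcross : Q.bd s t' * Q.bd s' t = 0 := shallow_cross hf hα hβ (Ne.symm h1)
  apply LC.ext'
  · rw [cancel_cells hβ'.1, cancel_cells hα'.1, cancel_cells hα.1, cancel_cells hβ.1,
      sdiff_sdiff_comm]
  · rw [cancel_dim hβ'.1, cancel_dim hα'.1, cancel_dim hα.1, cancel_dim hβ.1]
  · rw [cancel_bd hβ'.1, cancel_bd hα'.1]
    funext x y
    simp only [cancelBd, cancel_cells hα.1, cancel_cells hβ.1, cancel_bd hα.1, cancel_bd hβ.1]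
    have hset : (Q.cells \ {s, t}) \ {s', t'} = (Q.cells \ {s', t'}) \ {s, t} :=
      sdiff_sdiff_comm
    rw [hset]
    by_cases hc : x ∈ (Q.cells \ {s', t'}) \ {s, t} ∧ y ∈ (Q.cells \ {s', t'}) \ {s, t}
    · rw [if_pos hc, if_pos hc]
      obtain ⟨hcx, hcy⟩ := hc
      simp only [Finset.mem_sdiff, Finset.mem_insert, Finset.mem_singleton, not_or] at hcx hcy
      have hx1 : x ∈ Q.cells \ {s, t} := by
        simp only [Finset.mem_sdiff, Finset.mem_insert, Finset.mem_singleton, not_or]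
        tauto
      have hy1 : y ∈ Q.cells \ {s, t} := by
        simp only [Finset.mem_sdiff, Finset.mem_insert, Finset.mem_singleton, not_or]
        tauto
      have hx2 : x ∈ Q.cells \ {s', t'} := by
        simp only [Finset.mem_sdiff, Finset.mem_insert, Finset.mem_singleton, not_or]
        tauto
      have hy2 : y ∈ Q.cells \ {s', t'} := by
        simp only [Finset.mem_sdiff, Finset.mem_insert, Finset.mem_singleton, not_or]
        tauto
      have hms'1 : s' ∈ Q.cells \ {s, t} := by
        simp only [Finset.mem_sdiff, Finset.mem_insert, Finset.mem_singleton, not_or]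
        exact ⟨hs', h1, h2⟩
      have hmt'1 : t' ∈ Q.cells \ {s, t} := by
        simp only [Finset.mem_sdiff, Finset.mem_insert, Finset.mem_singleton, not_or]
        exact ⟨ht', h3, h4⟩
      have hms2 : s ∈ Q.cells \ {s', t'} := by
        simp only [Finset.mem_sdiff, Finset.mem_insert, Finset.mem_singleton, not_or]
        exact ⟨hs, Ne.symm h1, Ne.symm h3⟩
      have hmt2 : t ∈ Q.cells \ {s', t'} := by
        simp only [Finset.mem_sdiff, Finset.mem_insert, Finset.mem_singleton, not_or]
        exact ⟨ht, Ne.symm h2, Ne.symm h4⟩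
      rw [if_pos ⟨hx1, hy1⟩, if_pos ⟨hms'1, hy1⟩, if_pos ⟨hx1, hmt'1⟩,
        if_pos ⟨hx2, hy2⟩, if_pos ⟨hms2, hy2⟩, if_pos ⟨hx2, hmt2⟩]
      linear_combination (Q.bd s y * Q.bd x t - Q.bd s' y * Q.bd x t') * hcross
    · rw [if_neg hc, if_neg hc]

end ConnectedAux2

section ConnectedAux3

private lemma cancelList_append (L : LC C) (l₁ l₂ : List (C × C)) :
    cancelList L (l₁ ++ l₂) = cancelList (cancelList L l₁) l₂ := by
  induction l₁ generalizing L with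
  | nil => rfl
  | cons a l ih => simp only [List.cons_append, cancelList, List.append_eq]; exact ih _

private lemma quotAt_zero (L : LC C) {n : ℕ} (Φ : Fin n → C × C) : quotAt L Φ 0 = L := rfl

private lemma quotAt_succ (L : LC C) {n : ℕ} (Φ : Fin n → C × C) (k : ℕ) (hk : k < n) :
    quotAt L Φ (k + 1) = cancel (quotAt L Φ k) (Φ ⟨k, hk⟩).1 (Φ ⟨k, hk⟩).2 := by
  unfold quotAt
  have hlen : k < (List.ofFn Φ).length := by simpa using hk
  rw [List.take_succ, List.getElem?_eq_getElem hlen, List.getElem_ofFn]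
  rw [Option.toList_some, cancelList_append]
  rfl

private lemma quotAt_stable (L : LC C) {n : ℕ} (Φ : Fin n → C × C) (k : ℕ) (hk : n ≤ k) :
    quotAt L Φ k = quotAt L Φ n := by
  unfold quotAt
  rw [List.take_of_length_le (by simpa using hk), List.take_of_length_le (by simp)]

private lemma quotAt_congr (L : LC C) {n : ℕ} {Φ Φ' : Fin n → C × C} (k : ℕ) (hk : k ≤ n)
    (h : ∀ j : Fin n, (j : ℕ) < k → Φ j = Φ' j) : quotAt L Φ k = quotAt L Φ' k := by
  induction k with
  | zero => rfl
  | succ k ih =>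
    have hk' : k < n := by omega
    rw [quotAt_succ L Φ k hk', quotAt_succ L Φ' k hk',
      ih (by omega) (fun j hj => h j (by omega)), h ⟨k, hk'⟩ (by simp)]

private lemma isFilter_quotAt {L : LC C} {f : C → ℝ} (hf : IsFilter L f) {n : ℕ}
    {Φ : Fin n → C × C} (hΦ : IsShallowOrder L f Φ) (k : ℕ) :
    IsFilter (quotAt L Φ k) f := by
  induction k with
  | zero => exact hf
  | succ k ih =>
    by_cases hk : k < n
    · rw [quotAt_succ L Φ k hk]
      exact isFilter_cancel ih (hΦ.2.2 ⟨k, hk⟩)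
    · rw [quotAt_stable L Φ (k + 1) (by omega), ← quotAt_stable L Φ k (by omega)]
      exact ih

private lemma pair_mem {L : LC C} {f : C → ℝ} {n : ℕ} {Φ : Fin n → C × C}
    (hΦ : IsShallowOrder L f Φ) (i : Fin n) :
    (Φ i).1 ∈ (quotAt L Φ i).cells ∧ (Φ i).2 ∈ (quotAt L Φ i).cells :=
  (quotAt L Φ i).bd_mem _ _ (by rw [(hΦ.2.2 i).1]; exact one_ne_zero)

private lemma quotAt_cells_succ {L : LC C} {f : C → ℝ} {n : ℕ} {Φ : Fin n → C × C}
    (hΦ : IsShallowOrder L f Φ) (k : ℕ) (hk : k < n) :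
    (quotAt L Φ (k + 1)).cells
      = (quotAt L Φ k).cells \ {(Φ ⟨k, hk⟩).1, (Φ ⟨k, hk⟩).2} := by
  rw [quotAt_succ L Φ k hk]
  exact cancel_cells (hΦ.2.2 ⟨k, hk⟩).1

private lemma quotAt_cells_mono (L : LC C) {n : ℕ} (Φ : Fin n → C × C) {k l : ℕ}
    (h : k ≤ l) : (quotAt L Φ l).cells ⊆ (quotAt L Φ k).cells := by
  induction l with
  | zero =>
    have : k = 0 := by omega
    subst this
    exact Finset.Subset.refl _
  | succ l ih =>
    rcases Nat.lt_or_ge k (l + 1) with h' | h'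
    · refine Finset.Subset.trans ?_ (ih (by omega))
      unfold quotAt
      rw [List.take_succ, cancelList_append]
      cases hopt : (List.ofFn Φ)[l]? with
      | none => simp [cancelList]
      | some a =>
        rw [Option.toList_some]
        exact cancel_cells_subset _ _ _
    · have : k = l + 1 := by omega
      subst this
      exact Finset.Subset.refl _

private lemma pair_disjoint {L : LC C} {f : C → ℝ} {n : ℕ} {Φ : Fin n → C × C}
    (hΦ : IsShallowOrder L f Φ) {i j : Fin n} (h : (i : ℕ) < (j : ℕ)) :
    (Φ j).1 ≠ (Φ i).1 ∧ (Φ j).1 ≠ (Φ i).2 ∧ (Φ j).2 ≠ (Φ i).1 ∧ (Φ j).2 ≠ (Φ i).2 := by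
  have hmem := pair_mem hΦ j
  have hsub : (quotAt L Φ (j : ℕ)).cells ⊆ (quotAt L Φ ((i : ℕ) + 1)).cells :=
    quotAt_cells_mono L Φ (by omega)
  have hc := quotAt_cells_succ hΦ (i : ℕ) i.isLt
  rw [Fin.eta] at hc
  rw [hc] at hsub
  have m1 := hsub hmem.1
  have m2 := hsub hmem.2
  simp only [Finset.mem_sdiff, Finset.mem_insert, Finset.mem_singleton, not_or] at m1 m2
  exact ⟨m1.2.1, m1.2.2, m2.2.1, m2.2.2⟩

private lemma pair_shallow_persist {L : LC C} {f : C → ℝ} (hf : IsFilter L f) {n : ℕ}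
    {Φ : Fin n → C × C} (hΦ : IsShallowOrder L f Φ) (p : Fin n) {i : ℕ}
    (hsh : IsShallow (quotAt L Φ i) f (Φ p).1 (Φ p).2) :
    ∀ d, i + d ≤ (p : ℕ) → IsShallow (quotAt L Φ (i + d)) f (Φ p).1 (Φ p).2 := by
  intro d
  induction d with
  | zero => intro _; simpa using hsh
  | succ d ih =>
    intro hd
    have hk : i + d < n := by have := p.isLt; omega
    have hsh' := ih (by omega)
    have hrw : i + (d + 1) = (i + d) + 1 := by omega
    rw [hrw, quotAt_succ L Φ (i + d) hk]
    have hα := hΦ.2.2 ⟨i + d, hk⟩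
    have hdisj := pair_disjoint hΦ (i := ⟨i + d, hk⟩) (j := p) (by simp; omega)
    exact isShallow_cancel (isFilter_quotAt hf hΦ (i + d)) hα hsh'
      hdisj.1 hdisj.2.1 hdisj.2.2.1 hdisj.2.2.2

end ConnectedAux3

section ConnectedAux4

private lemma swap_step {L : LC C} {f : C → ℝ} (hf : IsFilter L f) {n : ℕ}
    {Φ : Fin n → C × C} (hΦ : IsShallowOrder L f Φ) (q : ℕ) (hq : q + 1 < n)
    (hsh : IsShallow (quotAt L Φ q) f (Φ ⟨q + 1, hq⟩).1 (Φ ⟨q + 1, hq⟩).2) :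
    IsShallowOrder L f (Φ ∘ Equiv.swap ⟨q, Nat.lt_of_succ_lt hq⟩ ⟨q + 1, hq⟩) ∧
      AdjSwap Φ (Φ ∘ Equiv.swap ⟨q, Nat.lt_of_succ_lt hq⟩ ⟨q + 1, hq⟩) := by
  have hq' : q < n := Nat.lt_of_succ_lt hq
  set Φ₁ : Fin n → C × C := Φ ∘ Equiv.swap ⟨q, hq'⟩ ⟨q + 1, hq⟩ with hΦ₁def
  have e0 : Φ₁ ⟨q, hq'⟩ = Φ ⟨q + 1, hq⟩ := by
    simp only [hΦ₁def, Function.comp_apply, Equiv.swap_apply_left]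
  have e1 : Φ₁ ⟨q + 1, hq⟩ = Φ ⟨q, hq'⟩ := by
    simp only [hΦ₁def, Function.comp_apply, Equiv.swap_apply_right]
  have eo : ∀ j : Fin n, j ≠ ⟨q, hq'⟩ → j ≠ ⟨q + 1, hq⟩ → Φ₁ j = Φ j := by
    intro j hj0 hj1
    simp only [hΦ₁def, Function.comp_apply, Equiv.swap_apply_of_ne_of_ne hj0 hj1]
  have hq_pre : ∀ k, k ≤ q → quotAt L Φ₁ k = quotAt L Φ k := by
    intro k hk
    refine quotAt_congr L k (by omega) (fun j hj => eo j ?_ ?_)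
    · simp only [ne_eq, Fin.ext_iff]; omega
    · simp only [ne_eq, Fin.ext_iff]; omega
  have hdisj := pair_disjoint hΦ (i := ⟨q, hq'⟩) (j := ⟨q + 1, hq⟩) (by simp)
  have hα := hΦ.2.2 ⟨q, hq'⟩
  have hfq : IsFilter (quotAt L Φ q) f := isFilter_quotAt hf hΦ q
  have hq_at : quotAt L Φ₁ (q + 1)
      = cancel (quotAt L Φ q) (Φ ⟨q + 1, hq⟩).1 (Φ ⟨q + 1, hq⟩).2 := by
    rw [quotAt_succ L Φ₁ q hq', hq_pre q le_rfl, e0]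
  have hΦq : quotAt L Φ (q + 1) = cancel (quotAt L Φ q) (Φ ⟨q, hq'⟩).1 (Φ ⟨q, hq'⟩).2 :=
    quotAt_succ L Φ q hq'
  have hcomm : quotAt L Φ₁ (q + 2) = quotAt L Φ (q + 2) := by
    rw [show q + 2 = (q + 1) + 1 from rfl, quotAt_succ L Φ₁ (q + 1) hq,
      quotAt_succ L Φ (q + 1) hq, hq_at, hΦq, e1]
    exact cancel_comm hfq hsh hα hdisj.1.symm hdisj.2.2.1.symm hdisj.2.1.symm
      hdisj.2.2.2.symm
  have hq_post : ∀ k, q + 2 ≤ k → quotAt L Φ₁ k = quotAt L Φ k := by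
    intro k
    induction k with
    | zero => omega
    | succ k ih =>
      intro hk
      rcases Nat.lt_or_ge k (q + 2) with h' | h'
      · have hk2 : k + 1 = q + 2 := by omega
        rw [hk2]
        exact hcomm
      · by_cases hkn : k < n
        · rw [quotAt_succ L Φ₁ k hkn, quotAt_succ L Φ k hkn, ih (by omega),
            eo ⟨k, hkn⟩ (by simp only [ne_eq, Fin.ext_iff]; omega)
              (by simp only [ne_eq, Fin.ext_iff]; omega)]
        · rw [quotAt_stable L Φ₁ (k + 1) (by omega), quotAt_stable L Φ (k + 1) (by omega),
            ← quotAt_stable L Φ₁ k (by omega), ← quotAt_stable L Φ k (by omega)]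
          exact ih (by omega)
  have hinj : Function.Injective Φ₁ := hΦ.1.comp (Equiv.injective _)
  have hbd : ∀ i, Φ₁ i ∈ BD L f := fun i => hΦ.2.1 _
  have hshallow : ∀ i : Fin n, IsShallow (quotAt L Φ₁ (i : ℕ)) f (Φ₁ i).1 (Φ₁ i).2 := by
    intro i
    rcases Nat.lt_trichotomy (i : ℕ) q with hlt | hieq | hgt
    · rw [hq_pre (i : ℕ) (by omega),
        eo i (by simp only [ne_eq, Fin.ext_iff]; omega)
          (by simp only [ne_eq, Fin.ext_iff]; omega)]
      exact hΦ.2.2 i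
    · have hieq' : i = ⟨q, hq'⟩ := Fin.ext hieq
      subst hieq'
      show IsShallow (quotAt L Φ₁ q) f (Φ₁ ⟨q, hq'⟩).1 (Φ₁ ⟨q, hq'⟩).2
      rw [hq_pre q le_rfl, e0]
      exact hsh
    · rcases Nat.eq_or_lt_of_le (Nat.succ_le_of_lt hgt) with heq1 | hgt1
      · have hieq' : i = ⟨q + 1, hq⟩ := Fin.ext heq1.symm
        subst hieq'
        show IsShallow (quotAt L Φ₁ (q + 1)) f (Φ₁ ⟨q + 1, hq⟩).1 (Φ₁ ⟨q + 1, hq⟩).2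
        rw [hq_at, e1]
        exact isShallow_cancel hfq hsh hα hdisj.1.symm hdisj.2.2.1.symm
          hdisj.2.1.symm hdisj.2.2.2.symm
      · rw [hq_post (i : ℕ) (by omega),
          eo i (by simp only [ne_eq, Fin.ext_iff]; omega)
            (by simp only [ne_eq, Fin.ext_iff]; omega)]
        exact hΦ.2.2 i
  refine ⟨⟨hinj, hbd, hshallow⟩, ⟨⟨q, hq'⟩, hq, ?_, ?_, ?_⟩⟩
  · exact e0
  · exact e1
  · intro j hj0 hj1
    exact eo j hj0 hj1

end ConnectedAux4

section ConnectedAux5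

private def Chain (L : LC C) (f : C → ℝ) {n : ℕ} (Φ Ψ : Fin n → C × C) : Prop :=
  ∃ (m : ℕ) (G : ℕ → Fin n → C × C),
    G 0 = Φ ∧ G m = Ψ ∧ (∀ k ≤ m, IsShallowOrder L f (G k)) ∧
    ∀ k < m, AdjSwap (G k) (G (k + 1))

private lemma chain_refl {L : LC C} {f : C → ℝ} {n : ℕ} {Φ : Fin n → C × C}
    (h : IsShallowOrder L f Φ) : Chain L f Φ Φ :=
  ⟨0, fun _ => Φ, rfl, rfl, fun _ _ => h, fun _ hk => absurd hk (by omega)⟩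

private lemma chain_single {L : LC C} {f : C → ℝ} {n : ℕ} {Φ Φ' : Fin n → C × C}
    (h : IsShallowOrder L f Φ) (h' : IsShallowOrder L f Φ') (hs : AdjSwap Φ Φ') :
    Chain L f Φ Φ' := by
  refine ⟨1, fun k => if k = 0 then Φ else Φ', by simp, by simp, ?_, ?_⟩
  · intro k _
    by_cases h0 : k = 0 <;> simp [h0, h, h']
  · intro k hk
    have hk0 : k = 0 := by omega
    subst hk0
    simpa using hs

private lemma chain_trans {L : LC C} {f : C → ℝ} {n : ℕ} {Φ Φ' Φ'' : Fin n → C × C}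
    (h1 : Chain L f Φ Φ') (h2 : Chain L f Φ' Φ'') : Chain L f Φ Φ'' := by
  obtain ⟨m₁, G₁, g10, g11, g1s, g1a⟩ := h1
  obtain ⟨m₂, G₂, g20, g21, g2s, g2a⟩ := h2
  have key : G₂ 0 = G₁ m₁ := by rw [g20, g11]
  refine ⟨m₁ + m₂, fun k => if k < m₁ then G₁ k else G₂ (k - m₁), ?_, ?_, ?_, ?_⟩
  · dsimp only
    by_cases h0 : 0 < m₁
    · rw [if_pos h0]; exact g10
    · rw [if_neg (by omega)]
      have hm : m₁ = 0 := by omega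
      subst hm
      rw [Nat.sub_self, key, g10]
  · dsimp only
    rw [if_neg (by omega), Nat.add_sub_cancel_left]
    exact g21
  · intro k hk
    dsimp only
    by_cases h0 : k < m₁
    · rw [if_pos h0]; exact g1s k (by omega)
    · rw [if_neg h0]; exact g2s (k - m₁) (by omega)
  · intro k hk
    dsimp only
    by_cases h0 : k + 1 < m₁
    · rw [if_pos (by omega), if_pos h0]; exact g1a k (by omega)
    · by_cases h1 : k < m₁
      · rw [if_pos h1, if_neg h0]
        have e0 : k + 1 - m₁ = 0 := by omega
        have e1 : m₁ = k + 1 := by omega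
        rw [e0, key, e1]
        exact g1a k (by omega)
      · rw [if_neg h1, if_neg (by omega)]
        have e : k + 1 - m₁ = (k - m₁) + 1 := by omega
        rw [e]
        exact g2a (k - m₁) (by omega)

private lemma bubble {L : LC C} {f : C → ℝ} (hf : IsFilter L f) {n : ℕ}
    (Ψ : Fin n → C × C) (i : ℕ) (hi : i < n) :
    ∀ d (Φ : Fin n → C × C), IsShallowOrder L f Φ →
      (∀ j : Fin n, (j : ℕ) < i → Φ j = Ψ j) →
      ∀ hp : i + 1 + d < n, Φ ⟨i + 1 + d, hp⟩ = Ψ ⟨i, hi⟩ →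
      IsShallow (quotAt L Φ i) f (Ψ ⟨i, hi⟩).1 (Ψ ⟨i, hi⟩).2 →
      ∃ Φ' : Fin n → C × C, Chain L f Φ Φ' ∧ IsShallowOrder L f Φ' ∧
        (∀ j : Fin n, (j : ℕ) < i + 1 → Φ' j = Ψ j) ∧ Set.range Φ' = Set.range Φ := by
  intro d
  induction d with
  | zero =>
    intro Φ hΦ hpre hp hval hsh
    have hp' : i + 1 < n := by omega
    have hval' : Φ ⟨i + 1, hp'⟩ = Ψ ⟨i, hi⟩ := hval
    obtain ⟨hord, hswap⟩ := swap_step hf hΦ i hp' (by rw [hval']; exact hsh)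
    refine ⟨Φ ∘ Equiv.swap ⟨i, Nat.lt_of_succ_lt hp'⟩ ⟨i + 1, hp'⟩,
      chain_single hΦ hord hswap, hord, ?_, (Equiv.surjective _).range_comp Φ⟩
    intro j hj
    rcases Nat.lt_or_ge (j : ℕ) i with h' | h'
    · rw [Function.comp_apply,
        Equiv.swap_apply_of_ne_of_ne (by simp only [ne_eq, Fin.ext_iff]; omega)
          (by simp only [ne_eq, Fin.ext_iff]; omega)]
      exact hpre j h'
    · have hj' : j = ⟨i, Nat.lt_of_succ_lt hp'⟩ := by
        apply Fin.ext
        show (j : ℕ) = i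
        omega
      subst hj'
      rw [Function.comp_apply, Equiv.swap_apply_left]
      exact hval'
  | succ d ih =>
    intro Φ hΦ hpre hp hval hsh
    have hq : (i + 1 + d) + 1 < n := by omega
    have hshΦ := hsh
    rw [show Ψ ⟨i, hi⟩ = Φ ⟨i + 1 + d + 1, hq⟩ from hval.symm] at hshΦ
    have hper := pair_shallow_persist hf hΦ ⟨i + 1 + d + 1, hq⟩ (i := i) hshΦ (d + 1)
      (by simp; omega)
    rw [show i + (d + 1) = i + 1 + d by omega] at hper
    obtain ⟨hord, hswap⟩ := swap_step hf hΦ (i + 1 + d) hq hper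
    set Φ₁ : Fin n → C × C :=
      Φ ∘ Equiv.swap ⟨i + 1 + d, Nat.lt_of_succ_lt hq⟩ ⟨i + 1 + d + 1, hq⟩ with hΦ₁def
    have pre1 : ∀ j : Fin n, (j : ℕ) < i → Φ₁ j = Ψ j := by
      intro j hj
      rw [hΦ₁def, Function.comp_apply,
        Equiv.swap_apply_of_ne_of_ne (by simp only [ne_eq, Fin.ext_iff]; omega)
          (by simp only [ne_eq, Fin.ext_iff]; omega)]
      exact hpre j hj
    have hp1 : i + 1 + d < n := by omega
    have val1 : Φ₁ ⟨i + 1 + d, hp1⟩ = Ψ ⟨i, hi⟩ := by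
      rw [hΦ₁def, Function.comp_apply, Equiv.swap_apply_left]
      exact hval
    have sh1 : IsShallow (quotAt L Φ₁ i) f (Ψ ⟨i, hi⟩).1 (Ψ ⟨i, hi⟩).2 := by
      rw [quotAt_congr L i (by omega) (fun j hj => by
        rw [hΦ₁def, Function.comp_apply,
          Equiv.swap_apply_of_ne_of_ne (by simp only [ne_eq, Fin.ext_iff]; omega)
            (by simp only [ne_eq, Fin.ext_iff]; omega)])]
      exact hsh
    obtain ⟨Φ', hchain, hord', hpre', hrange'⟩ := ih Φ₁ hord pre1 hp1 val1 sh1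
    refine ⟨Φ', chain_trans (chain_single hΦ hord hswap) hchain, hord', hpre', ?_⟩
    rw [hrange', hΦ₁def, (Equiv.surjective _).range_comp]

end ConnectedAux5

private lemma outer {L : LC C} {f : C → ℝ} (hf : IsFilter L f) {n : ℕ}
    {Ψ : Fin n → C × C} (hΨ : IsShallowOrder L f Ψ) :
    ∀ t i, i + t = n → ∀ Φ : Fin n → C × C, IsShallowOrder L f Φ →
      (∀ j : Fin n, Ψ j ∈ Set.range Φ) →
      (∀ j : Fin n, (j : ℕ) < i → Φ j = Ψ j) → Chain L f Φ Ψ := by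
  intro t
  induction t with
  | zero =>
    intro i hi Φ hΦ _ hpre
    have hΦΨ : Φ = Ψ := funext fun j => hpre j (by omega)
    rw [hΦΨ]
    exact chain_refl hΨ
  | succ t ih =>
    intro i hi Φ hΦ hrange hpre
    have hin : i < n := by omega
    by_cases heq : Φ ⟨i, hin⟩ = Ψ ⟨i, hin⟩
    · refine ih (i + 1) (by omega) Φ hΦ hrange ?_
      intro j hj
      rcases Nat.lt_or_ge (j : ℕ) i with h' | h'
      · exact hpre j h'
      · have hj' : j = ⟨i, hin⟩ := by
          apply Fin.ext
          show (j : ℕ) = i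
          omega
        rw [hj']
        exact heq
    · obtain ⟨p, hpv⟩ := hrange ⟨i, hin⟩
      have hip : i < (p : ℕ) := by
        rcases Nat.lt_trichotomy (p : ℕ) i with h' | h' | h'
        · exfalso
          have h1 := hpre p h'
          have h2 : Ψ p = Ψ ⟨i, hin⟩ := by rw [← h1, hpv]
          have h3 := hΨ.1 h2
          rw [h3] at h'
          simp at h'
        · exfalso
          apply heq
          have hp' : p = ⟨i, hin⟩ := by
            apply Fin.ext
            exact h'
          rw [hp'] at hpv
          exact hpv
        · exact h'
      have hquot : quotAt L Φ i = quotAt L Ψ i :=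
        quotAt_congr L i (by omega) (fun j hj => hpre j hj)
      have hshβ : IsShallow (quotAt L Φ i) f (Ψ ⟨i, hin⟩).1 (Ψ ⟨i, hin⟩).2 := by
        rw [hquot]
        exact hΨ.2.2 ⟨i, hin⟩
      have hp : i + 1 + ((p : ℕ) - i - 1) < n := by
        have := p.isLt
        omega
      have hval : Φ ⟨i + 1 + ((p : ℕ) - i - 1), hp⟩ = Ψ ⟨i, hin⟩ := by
        have hpe : (⟨i + 1 + ((p : ℕ) - i - 1), hp⟩ : Fin n) = p := by
          apply Fin.ext
          show i + 1 + ((p : ℕ) - i - 1) = (p : ℕ)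
          omega
        rw [hpe]
        exact hpv
      obtain ⟨Φ', hchain, hord', hpre', hrange'⟩ :=
        bubble hf Ψ i hin ((p : ℕ) - i - 1) Φ hΦ hpre hp hval hshβ
      refine chain_trans hchain (ih (i + 1) (by omega) Φ' hord' ?_ hpre')
      intro j
      rw [hrange']
      exact hrange j

/-- **Connectivity by transpositions.** Any two shallow orders
of `f` are connected by a sequence of shallow orders in which consecutive
orders differ by a single transposition of two adjacent positions. -/
theorem shallow_orders_connected (L : LC C) (f : C → ℝ) (hf : IsFilter L f)
    (Φ Ψ : Fin (BD L f).card → C × C)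
    (hΦ : IsShallowOrder L f Φ) (hΨ : IsShallowOrder L f Ψ) :
    ∃ (m : ℕ) (G : ℕ → Fin (BD L f).card → C × C),
      G 0 = Φ ∧ G m = Ψ ∧ (∀ k ≤ m, IsShallowOrder L f (G k)) ∧
      ∀ k < m, AdjSwap (G k) (G (k + 1)) := by
  have himg : Finset.image Φ Finset.univ = BD L f := by
    apply Finset.eq_of_subset_of_card_le
    · intro x hx
      obtain ⟨a, _, rfl⟩ := Finset.mem_image.1 hx
      exact hΦ.2.1 a
    · rw [Finset.card_image_of_injective _ hΦ.1, Finset.card_univ, Fintype.card_fin]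
  have hrange : ∀ j : Fin (BD L f).card, Ψ j ∈ Set.range Φ := by
    intro j
    have hj := hΨ.2.1 j
    rw [← himg] at hj
    obtain ⟨a, _, ha⟩ := Finset.mem_image.1 hj
    exact ⟨a, ha⟩
  exact outer hf hΨ (BD L f).card 0 (by omega) Φ hΦ hrange (fun j hj => absurd hj (by omega))
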